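/- In a coloured k-clique K = {x_1, x_2, …, x_{k+1}} with k + 1 vertices (k ≥ 3), consider, for a fixed Hamiltonian cycle (x_1 x_2 ⋯ x_k) through the first k vertices, the k Hamiltonian cycles c_j (1 ≤ j ≤ k) obtained by inserting the remaining vertex x_{k+1} immediately after x_j. Then the sum of their weights equals Σ_{j=1}^{k} weight(c_j) = m·k + (k−1)·weight((x_1 x_2 ⋯ x_k)); in particular, if weight((x_1 ⋯ x_k)) = m + 2 − k, then Σ_{j=1}^{k} weight(c_j) = (2m + 3 − k)·k − (m + 2), so some c_j has weight strictly less than 2m + 3 − k. -/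

import Mathlib

namespace MutClassAn

open Finset

variable {V : Type} [Fintype V] [DecidableEq V]

/-- `M i j c` is the number of arrows from `i` to `j` of colour `c`.
An `m`-coloured quiver has no loops, is monochromatic and skew-symmetric
(`c.rev = m - c` in `Fin (m+1)`). -/
def IsColouredQuiver {m : ℕ} (M : V → V → Fin (m + 1) → ℕ) : Prop :=
  (∀ i c, M i i c = 0) ∧
  (∀ i j c c', M i j c ≠ 0 → M i j c' ≠ 0 → c = c') ∧
  (∀ i j c, M i j c = M j i c.rev)

/-- A coloured quiver is simple if there is at most one arrow between any two
vertices in each direction. -/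
def IsSimpleCQ {m : ℕ} (M : V → V → Fin (m + 1) → ℕ) : Prop :=
  ∀ i j : V, (∑ c, M i j c) ≤ 1

/-- Adjacency in the underlying graph. -/
def CQAdj {m : ℕ} (M : V → V → Fin (m + 1) → ℕ) (i j : V) : Prop :=
  i ≠ j ∧ ∃ c, M i j c ≠ 0

/-- The colour of the (unique, for simple quivers) arrow from `i` to `j`. -/
def colourOf {m : ℕ} (M : V → V → Fin (m + 1) → ℕ) (i j : V) : ℕ :=
  ∑ c : Fin (m + 1), M i j c * c.val

/-- Buan–Thomas coloured quiver mutation at the vertex `j`. -/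
def mutate {m : ℕ} (M : V → V → Fin (m + 1) → ℕ) (j : V) :
    V → V → Fin (m + 1) → ℕ := fun i k c =>
  if k = j then M i k (c + 1)
  else if i = j then M i k (c - 1)
  else ((M i k c : ℤ) - ∑ t ∈ Finset.univ.filter (fun t => t ≠ c), (M i k t : ℤ)
      + ((M i j c : ℤ) - (M i j (c - 1) : ℤ)) * (M j k 0 : ℤ)
      + (M i j (Fin.last m) : ℤ) * ((M j k c : ℤ) - (M j k (c + 1) : ℤ))).toNat

/-- Mutation equivalence: the equivalence relation generated by single mutations. -/
def MutEquiv {m : ℕ} (M M' : V → V → Fin (m + 1) → ℕ) : Prop :=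
  Relation.EqvGen (fun A B => ∃ v, mutate A v = B) M M'

/-- A hole is an induced cycle of length at least `4` in the underlying graph. -/
def HasHole {m : ℕ} (M : V → V → Fin (m + 1) → ℕ) : Prop :=
  ∃ k : ℕ, 4 ≤ k ∧ ∃ x : ZMod k → V, Function.Injective x ∧
    (∀ i, CQAdj M (x i) (x (i + 1))) ∧
    ∀ i j : ZMod k, i ≠ j → j ≠ i + 1 → i ≠ j + 1 → ¬ CQAdj M (x i) (x j)

/-- A clique: a set of pairwise adjacent vertices. -/
def IsCliqueCQ {m : ℕ} (M : V → V → Fin (m + 1) → ℕ) (S : Set V) : Prop :=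
  S.Pairwise (CQAdj M)

/-- The set of neighbours of a vertex. -/
def nbrs {m : ℕ} (M : V → V → Fin (m + 1) → ℕ) (v : V) : Set V :=
  {u | CQAdj M v u}

/-- Connectedness of the underlying graph. -/
def CQConnected {m : ℕ} (M : V → V → Fin (m + 1) → ℕ) : Prop :=
  ∀ u w : V, Relation.ReflTransGen (CQAdj M) u w

/-- Condition (1) of the class `𝒬ₙᵐ`: the neighbourhood of every vertex is covered
by two cliques of sizes `r, k ≤ m + 2` with `r + k = z + 2`, with no arrows between
the two cliques away from the vertex. -/
def Cond1 {m : ℕ} (M : V → V → Fin (m + 1) → ℕ) : Prop :=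
  ∀ v : V, (nbrs M v).Nonempty →
    ∃ R K : Finset V, v ∈ R ∧ v ∈ K ∧ IsCliqueCQ M ↑R ∧ IsCliqueCQ M ↑K ∧
      R.card + K.card = (nbrs M v).ncard + 2 ∧ R.card ≤ m + 2 ∧ K.card ≤ m + 2 ∧
      (∀ u ∈ nbrs M v, u ∈ R ∨ u ∈ K) ∧
      ∀ a ∈ R, a ≠ v → ∀ b ∈ K, b ≠ v → ¬ CQAdj M a b

/-- Condition (2) of the class `𝒬ₙᵐ`: every triangle inside a clique has colour
sum `m - 1` along one of its two orientations (sums taken in `ℤ`). -/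
def Cond2 {m : ℕ} (M : V → V → Fin (m + 1) → ℕ) : Prop :=
  ∀ v1 v2 v3 : V, v1 ≠ v2 → v2 ≠ v3 → v1 ≠ v3 →
    CQAdj M v1 v2 → CQAdj M v2 v3 → CQAdj M v1 v3 →
    ((colourOf M v2 v1 : ℤ) + (colourOf M v1 v3 : ℤ) + (colourOf M v3 v2 : ℤ)
        = (m : ℤ) - 1 ∨
      ((m : ℤ) - colourOf M v2 v1) + ((m : ℤ) - colourOf M v1 v3)
          + ((m : ℤ) - colourOf M v3 v2) = (m : ℤ) - 1)

/-- Membership in the class `𝒬ₙᵐ` (`n` being the cardinality of the vertex set). -/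
def MemQClass {m : ℕ} (M : V → V → Fin (m + 1) → ℕ) : Prop :=
  IsColouredQuiver M ∧ IsSimpleCQ M ∧ CQConnected M ∧ ¬ HasHole M ∧ Cond1 M ∧ Cond2 M

/-- An `Aₙ`-quiver: the underlying graph is the path graph on the vertex set. -/
def IsAnQuiver {m : ℕ} (M : V → V → Fin (m + 1) → ℕ) : Prop :=
  ∃ e : Fin (Fintype.card V) ≃ V,
    ∀ i j : Fin (Fintype.card V),
      CQAdj M (e i) (e j) ↔ (i.val + 1 = j.val ∨ j.val + 1 = i.val)

/-- The coloured quiver on `Fin n` whose underlying graph is the path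
`0 — 1 — ⋯ — (n-1)`, with the arrow `j+1 → j` coloured `c j` and the arrow
`j → j+1` coloured `m - c j`. -/
def pathQuiver (m n : ℕ) (c : ℕ → Fin (m + 1)) :
    Fin n → Fin n → Fin (m + 1) → ℕ := fun i j d =>
  if j.val + 1 = i.val ∧ d = c j.val then 1
  else if i.val + 1 = j.val ∧ d = (c i.val).rev then 1 else 0

/-- Delete all arrows between vertices of `S`. -/
def deleteArrows {m : ℕ} (M : V → V → Fin (m + 1) → ℕ) (S : Finset V) :
    V → V → Fin (m + 1) → ℕ := fun i j c =>
  if i ∈ S ∧ j ∈ S then 0 else M i j c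

/-- The connected component of `u` is an `A_k`-quiver (a path) for some `k ≥ 1`. -/
def ComponentIsPath {m : ℕ} (M : V → V → Fin (m + 1) → ℕ) (u : V) : Prop :=
  ∃ (k : ℕ) (x : Fin k → V), 1 ≤ k ∧ Function.Injective x ∧
    Set.range x = {w | Relation.ReflTransGen (CQAdj M) u w} ∧
    ∀ i j : Fin k, CQAdj M (x i) (x j) ↔ (i.val + 1 = j.val ∨ j.val + 1 = i.val)

/-- An almost extremal clique: deleting its arrows leaves a connected component
which is an `A_k`-quiver for some `k ≥ 1`. -/
def AlmostExtremalClique {m : ℕ} (M : V → V → Fin (m + 1) → ℕ) (S : Finset V) : Prop :=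
  IsCliqueCQ M ↑S ∧ ∃ u : V, ComponentIsPath (deleteArrows M S) u

/-- An extremal clique: deleting its arrows leaves a single-vertex component. -/
def ExtremalClique {m : ℕ} (M : V → V → Fin (m + 1) → ℕ) (S : Finset V) : Prop :=
  IsCliqueCQ M ↑S ∧
    ∃ u : V, {w | Relation.ReflTransGen (CQAdj (deleteArrows M S)) u w} = {u}

/-- A coloured clique structure on a vertex type: colours `c i j ∈ {0,…,m}` with
skew-symmetry `c j i = m - c i j` and the triangle condition. -/
def IsCliqueColouring (m : ℕ) {W : Type} (c : W → W → ℕ) : Prop :=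
  (∀ i j : W, i ≠ j → c i j ≤ m) ∧
  (∀ i j : W, i ≠ j → c i j + c j i = m) ∧
  ∀ i j l : W, i ≠ j → j ≠ l → i ≠ l →
    ((c i j : ℤ) + (c j l : ℤ) + (c l i : ℤ) = (m : ℤ) - 1 ∨
      (c i j : ℤ) + (c j l : ℤ) + (c l i : ℤ) = 2 * (m : ℤ) + 1)

/-- Cyclic successor in `Fin k`. -/
def cyc {k : ℕ} (i : Fin k) : Fin k :=
  ⟨(i.val + 1) % k, Nat.mod_lt _ i.pos⟩

/-- The weight of the Hamiltonian cycle `x 0 → x 1 → ⋯ → x (k-1) → x 0`: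
the sum of the colours of its arrows. -/
def cycleWeight {W : Type} (c : W → W → ℕ) {k : ℕ} (x : Fin k → W) : ℤ :=
  ∑ i : Fin k, (c (x i) (x (cyc i)) : ℤ)

/-- The Hamiltonian cycle on `k+1` vertices obtained from the cycle
`x 0 → ⋯ → x (k-1) → x 0` by inserting the vertex `x (Fin.last k)`
immediately after `x j`. -/
def insertAfter {W : Type} {k : ℕ} (x : Fin (k + 1) → W) (j : Fin k) :
    Fin (k + 1) → W := fun i =>
  if i = 0 then x (Fin.last k)
  else x (Fin.castSucc ⟨(j.val + i.val) % k, Nat.mod_lt _ j.pos⟩)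

/-!
Inserting `z` between consecutive vertices `x j → x (j+1)` of a cycle changes its weight by
`c (x j) z + c z (x (j+1)) - c (x j) (x (j+1))`. Summed over all `j`, the removed arcs add up to
the weight `W₀` of the original cycle, and by skew-symmetry each of the `k` pairs
`c (x j) z + c z (x j)` contributes `m`; hence the total is `k W₀ - W₀ + m k`.
-/

section CycleWeight

variable {W : Type} (c : W → W → ℕ)

def pathWeight {n : ℕ} (y : Fin (n + 1) → W) : ℤ :=
  ∑ i : Fin n, (c (y i.castSucc) (y i.succ) : ℤ)

lemma cyc_eq_add_one {k : ℕ} [NeZero k] (i : Fin k) : cyc i = i + 1 := by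
  ext
  simp only [cyc, Fin.val_add, Fin.val_one', Nat.add_mod_mod]

lemma cycleWeight_eq_sum_add_one {k : ℕ} [NeZero k] (x : Fin k → W) :
    cycleWeight c x = ∑ i, (c (x i) (x (i + 1)) : ℤ) := by
  simp only [cycleWeight, cyc_eq_add_one]

lemma cycleWeight_rotate {k : ℕ} [NeZero k] (x : Fin k → W) (s : Fin k) :
    cycleWeight c (fun i => x (s + i)) = cycleWeight c x := by
  simp only [cycleWeight_eq_sum_add_one, ← add_assoc]
  exact Equiv.sum_comp (Equiv.addLeft s) fun i => (c (x i) (x (i + 1)) : ℤ)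

lemma cycleWeight_eq_pathWeight_add {n : ℕ} (y : Fin (n + 1) → W) :
    cycleWeight c y = pathWeight c y + c (y (Fin.last n)) (y 0) := by
  have hcyc_last : cyc (Fin.last n) = 0 := by ext; simp [cyc]
  have hcyc_castSucc (i : Fin n) : cyc i.castSucc = i.succ := by
    ext; simp [cyc, Nat.mod_eq_of_lt (Nat.succ_lt_succ i.isLt)]
  simp only [cycleWeight, pathWeight, Fin.sum_univ_castSucc, hcyc_last, hcyc_castSucc]

lemma cycleWeight_cons {n : ℕ} (z : W) (p : Fin (n + 1) → W) :
    cycleWeight c (Fin.cons z p : Fin (n + 2) → W)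
      = cycleWeight c p - c (p (Fin.last n)) (p 0) + c (p (Fin.last n)) z + c z (p 0) := by
  have hpath : pathWeight c (Fin.cons z p : Fin (n + 2) → W) = c z (p 0) + pathWeight c p := by
    simp only [pathWeight, Fin.sum_univ_succ, Fin.castSucc_zero, Fin.cons_zero, Fin.cons_succ,
      ← Fin.succ_castSucc]
  rw [cycleWeight_eq_pathWeight_add, cycleWeight_eq_pathWeight_add, hpath, ← Fin.succ_last,
    Fin.cons_succ, Fin.cons_zero]
  ring

lemma insertAfter_eq_cons {n : ℕ} (x : Fin (n + 2) → W) (j : Fin (n + 1)) :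
    insertAfter x j = Fin.cons (x (Fin.last _)) fun i => x (j + 1 + i).castSucc := by
  ext i
  cases i using Fin.cases with
  | zero => simp [insertAfter]
  | succ i =>
    simp only [insertAfter, Fin.succ_ne_zero, if_false, Fin.cons_succ]
    congr 2
    ext
    simp only [Fin.val_succ, Fin.val_add, Fin.val_one', Nat.add_mod_mod, Nat.mod_add_mod]
    ring_nf

lemma cycleWeight_insertAfter {n : ℕ} (x : Fin (n + 2) → W) (j : Fin (n + 1)) :
    cycleWeight c (insertAfter x j)
      = cycleWeight c (fun i : Fin (n + 1) => x i.castSucc)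
        - c (x j.castSucc) (x (j + 1).castSucc)
        + c (x j.castSucc) (x (Fin.last _)) + c (x (Fin.last _)) (x (j + 1).castSucc) := by
  have hlast : j + 1 + Fin.last n = j := by
    rw [add_assoc, add_comm 1, Fin.last_add_one, add_zero]
  have hrot := cycleWeight_rotate c (fun i : Fin (n + 1) => x i.castSucc) (j + 1)
  rw [insertAfter_eq_cons, cycleWeight_cons, hrot, hlast, add_zero]

lemma sum_cycleWeight_insertAfter {m k : ℕ} (hskew : ∀ a b : W, a ≠ b → c a b + c b a = m)
    {x : Fin (k + 1) → W} (hx : Function.Injective x) :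
    ∑ j, cycleWeight c (insertAfter x j)
      = m * k + ((k : ℤ) - 1) * cycleWeight c (fun i : Fin k => x i.castSucc) := by
  cases k with
  | zero => simp [cycleWeight]
  | succ n =>
    set z := x (Fin.last _)
    set x' : Fin (n + 1) → W := fun i => x i.castSucc
    have harcs : ∑ j, (c (x' j) (x' (j + 1)) : ℤ) = cycleWeight c x' :=
      (cycleWeight_eq_sum_add_one c x').symm
    have hshift : ∑ j, (c z (x' (j + 1)) : ℤ) = ∑ j, (c z (x' j) : ℤ) :=
      Equiv.sum_comp (Equiv.addRight 1) fun j => (c z (x' j) : ℤ)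
    have hpair (j : Fin (n + 1)) : (c (x' j) z : ℤ) + c z (x' j) = m :=
      mod_cast hskew _ _ (hx.ne (Fin.castSucc_lt_last j).ne)
    calc ∑ j, cycleWeight c (insertAfter x j)
        = ∑ j, (cycleWeight c x' - c (x' j) (x' (j + 1)))
          + ∑ j, ((c (x' j) z : ℤ) + c z (x' j))
          + (∑ j, (c z (x' (j + 1)) : ℤ) - ∑ j, (c z (x' j) : ℤ)) := by
          simp only [cycleWeight_insertAfter, sum_add_distrib, sum_sub_distrib]
          ring
      _ = m * (n + 1 : ℕ) + (((n + 1 : ℕ) : ℤ) - 1) * cycleWeight c x' := by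
          simp only [hshift, sum_sub_distrib, harcs, hpair, sum_const, card_univ,
            Fintype.card_fin, nsmul_eq_mul]
          ring

end CycleWeight

theorem insert_cycles_weight_sum_general (m k : ℕ) (W : Type)
    (c : W → W → ℕ) (hc : IsCliqueColouring m c)
    (x : Fin (k + 1) → W) (hx : Function.Bijective x) :
    (∑ j : Fin k, cycleWeight c (insertAfter x j))
        = (m : ℤ) * k + ((k : ℤ) - 1) * cycleWeight c (fun i : Fin k => x i.castSucc) ∧
    (cycleWeight c (fun i : Fin k => x i.castSucc) = (m : ℤ) + 2 - k →
      (∑ j : Fin k, cycleWeight c (insertAfter x j))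
          = (2 * (m : ℤ) + 3 - k) * k - ((m : ℤ) + 2) ∧
      ∃ j : Fin k, cycleWeight c (insertAfter x j) < 2 * (m : ℤ) + 3 - k) := by
  have hsum := sum_cycleWeight_insertAfter c hc.2.1 hx.injective
  refine ⟨hsum, fun hW₀ => ?_⟩
  have htotal : ∑ j, cycleWeight c (insertAfter x j) = (2 * (m : ℤ) + 3 - k) * k - (m + 2) := by
    rw [hsum, hW₀]; ring
  refine ⟨htotal, ?_⟩
  obtain ⟨j, -, hj⟩ : ∃ j ∈ univ, cycleWeight c (insertAfter x j) < 2 * (m : ℤ) + 3 - k := by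
    apply exists_lt_of_sum_lt
    rw [htotal, sum_const, card_univ, Fintype.card_fin, nsmul_eq_mul]
    linarith [(m.cast_nonneg : (0 : ℤ) ≤ m)]
  exact ⟨j, hj⟩

/-- The key counting identity: in a coloured clique on `k + 1` vertices, for a
Hamiltonian cycle through the first `k` vertices of weight `W₀`, the `k` cycles
`c_j` obtained by inserting the remaining vertex after the `j`-th one have total
weight `m·k + (k-1)·W₀`; in particular if `W₀ = m + 2 - k` the total weight is
`(2m + 3 - k)·k - (m + 2)`, so some `c_j` has weight `< 2m + 3 - k`. -/
theorem insert_cycles_weight_sum (m k : ℕ) (hm : 1 ≤ m) (hk : 3 ≤ k)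
    (W : Type) [Fintype W] (hcard : Fintype.card W = k + 1)
    (c : W → W → ℕ) (hc : IsCliqueColouring m c)
    (x : Fin (k + 1) → W) (hx : Function.Bijective x) :
    (∑ j : Fin k, cycleWeight c (insertAfter x j))
        = (m : ℤ) * k + ((k : ℤ) - 1) * cycleWeight c (fun i : Fin k => x i.castSucc) ∧
    (cycleWeight c (fun i : Fin k => x i.castSucc) = (m : ℤ) + 2 - k →
      (∑ j : Fin k, cycleWeight c (insertAfter x j))
          = (2 * (m : ℤ) + 3 - k) * k - ((m : ℤ) + 2) ∧
      ∃ j : Fin k, cycleWeight c (insertAfter x j) < 2 * (m : ℤ) + 3 - k) :=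
  insert_cycles_weight_sum_general m k W c hc x hx

end MutClassAn
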